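/- Let DB be a finite uncertain database whose events take values in [0,1], let w : I → ℝ be a weight function with w(i) ≥ 0 for all items i, let F be a finite set of items, and let θ ∈ ℝ. Let α = β ++ ⟨{i}⟩ for a pattern β and item i. If wExpSup^cap_DB(α) = expSup^cap_DB(α) · wgt^cap_F(α) < θ, then WES_DB(α') < θ for every nonempty pattern α' with α ⊑ α' whose items all belong to items(α) ∪ F; i.e., neither α nor any such supersequence of α can be weighted frequent with respect to threshold θ. (Pruning condition derived from Lemma 4.) -/

import Mathlib

open scoped Classical

noncomputable section

variable {I : Type*}

/-- `js` is an occurrence of pattern `α` in uncertain sequence `S`: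
a strictly increasing list of 1-based positions `1 ≤ j₁ < ⋯ < jₘ ≤ n`. -/
def IsOcc (S : List (I → ℝ)) (α : List (Finset I)) (js : List ℕ) : Prop :=
  js.length = α.length ∧ List.Pairwise (· < ·) js ∧ ∀ j ∈ js, 1 ≤ j ∧ j ≤ S.length

/-- The probability of the occurrence `js` of pattern `α` in `S`:
`∏ₖ ∏_{i ∈ eₖ} p_{jₖ}(i)`. -/
def occProb (S : List (I → ℝ)) (α : List (Finset I)) (js : List ℕ) : ℝ :=
  ((α.zip js).map fun ej => ∏ i ∈ ej.1, S.getD (ej.2 - 1) (fun _ => (0 : ℝ)) i).prod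

/-- `maxPr_S(α)`: the maximum occurrence probability of `α` in `S`
(`0` if there is no occurrence, since `sSup ∅ = 0` in `ℝ`; `1` for the empty pattern). -/
def maxPr (S : List (I → ℝ)) (α : List (Finset I)) : ℝ :=
  sSup {x : ℝ | ∃ js, IsOcc S α js ∧ occProb S α js = x}

/-- `α ⊑ α'`: there are positions `j₁ < ⋯ < jₘ` in `α'` with `eₖ ⊆ e'_{jₖ}` for all `k`. -/
def IsSubpattern (α α' : List (Finset I)) : Prop :=
  ∃ β : List (Finset I), List.Forall₂ (· ⊆ ·) α β ∧ β.Sublist α'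

/-- Expected support of `α` in a database `DB`. -/
def expSup (DB : List (List (I → ℝ))) (α : List (Finset I)) : ℝ :=
  (DB.map fun S => maxPr S α).sum

/-- `maxPr_DB(α) = max_{S ∈ DB} maxPr_S(α)`, `0` for an empty database. -/
def maxPrDB (DB : List (List (I → ℝ))) (α : List (Finset I)) : ℝ :=
  (DB.map fun S => maxPr S α).foldr max 0

/-- `expSup^cap_DB(β ++ ⟨{i}⟩) = maxPr_DB(β) · Σ_{S ∈ DB} maxPr_S(⟨{i}⟩)`. -/
def expSupCap (DB : List (List (I → ℝ))) (β : List (Finset I)) (i : I) : ℝ :=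
  maxPrDB DB β * expSup DB [{i}]

/-- Support count of item `i`: the number of sequences `S ∈ DB` with `maxPr_S(⟨{i}⟩) > 0`. -/
def supCount (DB : List (List (I → ℝ))) (i : I) : ℕ :=
  (DB.filter fun S => decide (0 < maxPr S [({i} : Finset I)])).length

/-- The set of items occurring in a pattern. -/
def pItems (α : List (Finset I)) : Finset I :=
  α.foldr (· ∪ ·) ∅

/-- The size of a pattern: total number of items counted across events. -/
def pSize (α : List (Finset I)) : ℕ :=
  (α.map Finset.card).sum

/-- `sWeight(α)`: the sum of the weights of all items of `α` divided by its size. -/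
def sWeight (w : I → ℝ) (α : List (Finset I)) : ℝ :=
  (α.map fun e => ∑ i ∈ e, w i).sum / (pSize α : ℝ)

/-- `wgt^cap_F(α)`: the maximum of `w` over `F ∪ items(α)`. -/
def wgtCap (w : I → ℝ) (F : Finset I) (α : List (Finset I)) : ℝ :=
  (F ∪ pItems α).fold max 0 w

/-- Weighted expected support: `WES_DB(α) = expSup_DB(α) · sWeight(α)`. -/
def WES (DB : List (List (I → ℝ))) (w : I → ℝ) (α : List (Finset I)) : ℝ :=
  expSup DB α * sWeight w α

/-- The SupCalc array `g_{S,α}(m)`: for nonempty `α`, the maximum probability of an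
occurrence of `α` in `S` whose last position is `m` (`0` if none, in particular for `m = 0`);
for the empty pattern it is `1`. -/
def gArr (S : List (I → ℝ)) (α : List (Finset I)) (m : ℕ) : ℝ :=
  if α = [] then 1
  else sSup {x : ℝ | ∃ js, IsOcc S α js ∧ js.getLast? = some m ∧ occProb S α js = x}


/-! ### Auxiliary lemmas -/

lemma list_prod_mem_Icc {l : List ℝ} (h : ∀ x ∈ l, 0 ≤ x ∧ x ≤ 1) :
    0 ≤ l.prod ∧ l.prod ≤ 1 := by
  induction l with
  | nil => simp
  | cons a t ih =>
    have ha := h a (by simp)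
    have ht := ih (fun x hx => h x (by simp [hx]))
    refine ⟨mul_nonneg ha.1 ht.1, ?_⟩
    calc a * t.prod ≤ 1 * 1 := mul_le_mul ha.2 ht.2 ht.1 zero_le_one
      _ = 1 := one_mul 1

lemma list_prod_le_of_sublist {l₁ l₂ : List ℝ} (h : l₁.Sublist l₂)
    (h2 : ∀ x ∈ l₂, 0 ≤ x ∧ x ≤ 1) : l₂.prod ≤ l₁.prod := by
  induction h with
  | slnil => simp
  | @cons l₁ l₂ a hs ih =>
    have hmem : ∀ x ∈ l₂, 0 ≤ x ∧ x ≤ 1 := fun x hx => h2 x (by simp [hx])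
    have ha := h2 a (by simp)
    calc (a :: l₂).prod = a * l₂.prod := by simp
      _ ≤ 1 * l₂.prod := mul_le_mul_of_nonneg_right ha.2 (list_prod_mem_Icc hmem).1
      _ = l₂.prod := one_mul _
      _ ≤ l₁.prod := ih hmem
  | @cons_cons l₁ l₂ a hs ih =>
    have hmem : ∀ x ∈ l₂, 0 ≤ x ∧ x ≤ 1 := fun x hx => h2 x (by simp [hx])
    have ha := h2 a (by simp)
    simp only [List.prod_cons]
    exact mul_le_mul_of_nonneg_left (ih hmem) ha.1

lemma factor_mem_Icc (S : List (I → ℝ)) (hS : ∀ p ∈ S, ∀ i : I, 0 ≤ p i ∧ p i ≤ 1)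
    (e : Finset I) (j : ℕ) (hj : 1 ≤ j ∧ j ≤ S.length) :
    0 ≤ (∏ i ∈ e, S.getD (j - 1) (fun _ => (0 : ℝ)) i) ∧
      (∏ i ∈ e, S.getD (j - 1) (fun _ => (0 : ℝ)) i) ≤ 1 := by
  have hlt : j - 1 < S.length := by omega
  rw [List.getD_eq_getElem S _ hlt]
  have hp := hS (S[j - 1]) (List.getElem_mem hlt)
  exact ⟨Finset.prod_nonneg fun i _ => (hp i).1,
    Finset.prod_le_one (fun i _ => (hp i).1) (fun i _ => (hp i).2)⟩

lemma occProb_mem_Icc (S : List (I → ℝ)) (hS : ∀ p ∈ S, ∀ i : I, 0 ≤ p i ∧ p i ≤ 1)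
    (α : List (Finset I)) (js : List ℕ) (hjs : ∀ j ∈ js, 1 ≤ j ∧ j ≤ S.length) :
    0 ≤ occProb S α js ∧ occProb S α js ≤ 1 := by
  apply list_prod_mem_Icc
  rintro x hx
  simp only [List.mem_map] at hx
  obtain ⟨⟨e, j⟩, hmem, rfl⟩ := hx
  exact factor_mem_Icc S hS e j (hjs j (List.of_mem_zip hmem).2)

lemma maxPr_bddAbove (S : List (I → ℝ)) (hS : ∀ p ∈ S, ∀ i : I, 0 ≤ p i ∧ p i ≤ 1)
    (α : List (Finset I)) :
    BddAbove {x : ℝ | ∃ js, IsOcc S α js ∧ occProb S α js = x} := by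
  refine ⟨1, ?_⟩
  rintro x ⟨js, hocc, rfl⟩
  exact (occProb_mem_Icc S hS α js hocc.2.2).2

lemma maxPr_nonneg (S : List (I → ℝ)) (hS : ∀ p ∈ S, ∀ i : I, 0 ≤ p i ∧ p i ≤ 1)
    (α : List (Finset I)) : 0 ≤ maxPr S α := by
  apply Real.sSup_nonneg
  rintro x ⟨js, hocc, rfl⟩
  exact (occProb_mem_Icc S hS α js hocc.2.2).1

lemma exists_sub_occ : ∀ {γ α' : List (Finset I)}, γ.Sublist α' →
    ∀ js' : List ℕ, js'.length = α'.length →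
      ∃ js : List ℕ, js.Sublist js' ∧ js.length = γ.length ∧
        (γ.zip js).Sublist (α'.zip js') := by
  intro γ α' h
  induction h with
  | slnil => intro js' h; exact ⟨[], by simp, by simpa using h, by simp⟩
  | @cons l₁ l₂ a hs ih =>
    intro js' hl
    cases js' with
    | nil => simp at hl
    | cons j rest =>
      obtain ⟨js, h1, h2, h3⟩ := ih rest (by simpa using hl)
      exact ⟨js, h1.trans (List.sublist_cons_self j rest), h2,
        h3.trans (List.sublist_cons_self (a, j) (l₂.zip rest))⟩
  | @cons_cons l₁ l₂ a hs ih =>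
    intro js' hl
    cases js' with
    | nil => simp at hl
    | cons j rest =>
      obtain ⟨js, h1, h2, h3⟩ := ih rest (by simpa using hl)
      exact ⟨j :: js, h1.cons₂ j, by simp [h2], h3.cons₂ (a, j)⟩

lemma occProb_mono_event (S : List (I → ℝ)) (hS : ∀ p ∈ S, ∀ i : I, 0 ≤ p i ∧ p i ≤ 1) :
    ∀ {α γ : List (Finset I)}, List.Forall₂ (· ⊆ ·) α γ →
    ∀ js : List ℕ, (∀ j ∈ js, 1 ≤ j ∧ j ≤ S.length) →
      occProb S γ js ≤ occProb S α js := by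
  intro α γ hf
  induction hf with
  | nil => intro js _; simp [occProb]
  | @cons a b l₁ l₂ hab hf ih =>
    intro js hjs
    cases js with
    | nil => simp [occProb]
    | cons j rest =>
      have hj := hjs j (by simp)
      have hrest : ∀ j' ∈ rest, 1 ≤ j' ∧ j' ≤ S.length := fun j' hj' => hjs j' (by simp [hj'])
      have hkey : (∏ i ∈ b, S.getD (j - 1) (fun _ => (0 : ℝ)) i)
          ≤ ∏ i ∈ a, S.getD (j - 1) (fun _ => (0 : ℝ)) i := by
        rw [← Finset.prod_sdiff hab]
        have h1 := factor_mem_Icc S hS (b \ a) j hj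
        have h2 := factor_mem_Icc S hS a j hj
        calc (∏ i ∈ b \ a, S.getD (j - 1) (fun _ => (0 : ℝ)) i) *
              ∏ i ∈ a, S.getD (j - 1) (fun _ => (0 : ℝ)) i
            ≤ 1 * ∏ i ∈ a, S.getD (j - 1) (fun _ => (0 : ℝ)) i :=
              mul_le_mul_of_nonneg_right h1.2 h2.1
          _ = _ := one_mul _
      have hprod2 := occProb_mem_Icc S hS l₂ rest hrest
      have hfac := factor_mem_Icc S hS a j hj
      show (∏ i ∈ b, S.getD (j - 1) (fun _ => (0:ℝ)) i) * occProb S l₂ rest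
          ≤ (∏ i ∈ a, S.getD (j - 1) (fun _ => (0:ℝ)) i) * occProb S l₁ rest
      calc (∏ i ∈ b, S.getD (j - 1) (fun _ => (0:ℝ)) i) * occProb S l₂ rest
          ≤ (∏ i ∈ a, S.getD (j - 1) (fun _ => (0:ℝ)) i) * occProb S l₂ rest :=
            mul_le_mul_of_nonneg_right hkey hprod2.1
        _ ≤ (∏ i ∈ a, S.getD (j - 1) (fun _ => (0:ℝ)) i) * occProb S l₁ rest :=
            mul_le_mul_of_nonneg_left (ih rest hrest) hfac.1

lemma maxPr_le_of_subpattern (S : List (I → ℝ)) (hS : ∀ p ∈ S, ∀ i : I, 0 ≤ p i ∧ p i ≤ 1)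
    {α α' : List (Finset I)} (hsub : IsSubpattern α α') :
    maxPr S α' ≤ maxPr S α := by
  obtain ⟨γ, hf, hγ⟩ := hsub
  apply Real.sSup_le _ (maxPr_nonneg S hS α)
  rintro x ⟨js', ⟨hlen, hsort, hrange⟩, rfl⟩
  obtain ⟨js, hjs_sub, hjslen, hzip⟩ := exists_sub_occ hγ js' hlen
  have hrange' : ∀ j ∈ js, 1 ≤ j ∧ j ≤ S.length := fun j hj => hrange j (hjs_sub.subset hj)
  have hocc : IsOcc S α js := ⟨hjslen.trans hf.length_eq.symm, hsort.sublist hjs_sub, hrange'⟩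
  have h1 : occProb S α' js' ≤ occProb S γ js := by
    apply list_prod_le_of_sublist (hzip.map _)
    rintro x hx
    simp only [List.mem_map] at hx
    obtain ⟨⟨e, j⟩, hmem, rfl⟩ := hx
    exact factor_mem_Icc S hS e j (hrange j (List.of_mem_zip hmem).2)
  have h2 : occProb S γ js ≤ occProb S α js := occProb_mono_event S hS hf js hrange'
  exact (h1.trans h2).trans (le_csSup (maxPr_bddAbove S hS α) ⟨js, hocc, rfl⟩)

lemma maxPr_append_singleton (S : List (I → ℝ)) (hS : ∀ p ∈ S, ∀ i : I, 0 ≤ p i ∧ p i ≤ 1)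
    (β : List (Finset I)) (i : I) :
    maxPr S (β ++ [{i}]) ≤ maxPr S β * maxPr S [({i} : Finset I)] := by
  apply Real.sSup_le _ (mul_nonneg (maxPr_nonneg S hS β) (maxPr_nonneg S hS _))
  rintro x ⟨js, ⟨hlen, hsort, hrange⟩, rfl⟩
  rcases List.eq_nil_or_concat js with rfl | ⟨js₁, j, rfl⟩
  · simp at hlen
  rw [List.concat_eq_append] at *
  have hlen1 : js₁.length = β.length := by
    simpa using hlen
  have hsplit : occProb S (β ++ [{i}]) (js₁ ++ [j])
      = occProb S β js₁ * occProb S [({i} : Finset I)] [j] := by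
    unfold occProb
    rw [List.zip_append hlen1.symm, List.map_append, List.prod_append]
  have hocc1 : IsOcc S β js₁ :=
    ⟨hlen1, hsort.sublist (List.sublist_append_left js₁ [j]),
      fun j' hj' => hrange j' (by simp [hj'])⟩
  have hocc2 : IsOcc S [({i} : Finset I)] [j] :=
    ⟨by simp, by simp, fun j' hj' => hrange j' (by simp at hj'; simp [hj'])⟩
  have hp1 := occProb_mem_Icc S hS β js₁ hocc1.2.2
  have hp2 := occProb_mem_Icc S hS [({i} : Finset I)] [j] hocc2.2.2
  rw [hsplit]
  exact mul_le_mul (le_csSup (maxPr_bddAbove S hS β) ⟨js₁, hocc1, rfl⟩)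
    (le_csSup (maxPr_bddAbove S hS _) ⟨[j], hocc2, rfl⟩) hp2.1 (maxPr_nonneg S hS β)

lemma le_foldr_max {l : List ℝ} {a : ℝ} (h : a ∈ l) : a ≤ l.foldr max 0 := by
  induction l with
  | nil => simp at h
  | cons b t ih =>
    rcases List.mem_cons.mp h with rfl | h'
    · exact le_max_left _ _
    · exact (ih h').trans (le_max_right _ _)

lemma foldr_max_nonneg (l : List ℝ) : 0 ≤ l.foldr max 0 := by
  induction l with
  | nil => simp
  | cons b t ih => exact ih.trans (le_max_right _ _)

lemma mem_pItems {i : I} : ∀ {α : List (Finset I)}, i ∈ pItems α ↔ ∃ e ∈ α, i ∈ e := by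
  intro α
  induction α with
  | nil => simp [pItems]
  | cons e t ih =>
    show i ∈ e ∪ pItems t ↔ _
    simp [Finset.mem_union, ih]

lemma card_sum_cast : ∀ (α' : List (Finset I)),
    ((α'.map Finset.card).sum : ℝ) = (α'.map fun e => ((e.card : ℝ))).sum
  | [] => by simp
  | e :: t => by simp [card_sum_cast t]

lemma sWeight_le (w : I → ℝ) (α' : List (Finset I)) (M : ℝ) (hM : 0 ≤ M)
    (hitems : ∀ i ∈ pItems α', w i ≤ M) : sWeight w α' ≤ M := by
  unfold sWeight
  rcases Nat.eq_zero_or_pos (pSize α') with h0 | hpos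
  · rw [h0]
    simpa using hM
  · rw [div_le_iff₀ (by exact_mod_cast hpos)]
    have hbound : (α'.map fun e => ∑ i ∈ e, w i).sum
        ≤ (α'.map fun e => M * (e.card : ℝ)).sum := by
      apply List.sum_le_sum
      intro e he
      calc (∑ i ∈ e, w i) ≤ ∑ _i ∈ e, M :=
            Finset.sum_le_sum fun i hi => hitems i (mem_pItems.mpr ⟨e, he, hi⟩)
        _ = M * (e.card : ℝ) := by
            rw [Finset.sum_const, nsmul_eq_mul, mul_comm]
    refine hbound.trans (le_of_eq ?_)
    rw [List.sum_map_mul_left]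
    congr 1
    unfold pSize
    exact (card_sum_cast α').symm

lemma sWeight_nonneg (w : I → ℝ) (hw : ∀ i : I, 0 ≤ w i) (α' : List (Finset I)) :
    0 ≤ sWeight w α' := by
  unfold sWeight
  apply div_nonneg _ (Nat.cast_nonneg _)
  apply List.sum_nonneg
  intro x hx
  simp only [List.mem_map] at hx
  obtain ⟨e, _, rfl⟩ := hx
  exact Finset.sum_nonneg fun i _ => hw i

/-- pruning condition from Lemma 4: if
`wExpSup^cap_DB(α) = expSup^cap_DB(α) · wgt^cap_F(α) < θ` for `α = β ++ ⟨{i}⟩`,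
then no nonempty supersequence `α'` of `α` whose items lie in `items(α) ∪ F`
can be weighted frequent with respect to `θ`. -/
theorem WES_lt_of_wExpSupCap_lt
    (DB : List (List (I → ℝ)))
    (hDB : ∀ S ∈ DB, ∀ p ∈ S, ∀ i : I, 0 ≤ p i ∧ p i ≤ 1)
    (w : I → ℝ) (hw : ∀ i : I, 0 ≤ w i) (F : Finset I) (θ : ℝ)
    (β : List (Finset I)) (i : I)
    (h : expSupCap DB β i * wgtCap w F (β ++ [{i}]) < θ) :
    ∀ α' : List (Finset I), α' ≠ [] → IsSubpattern (β ++ [{i}]) α' →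
      pItems α' ⊆ pItems (β ++ [{i}]) ∪ F → WES DB w α' < θ := by
  intro α' hne hsub hitems
  set M := wgtCap w F (β ++ [{i}]) with hMdef
  have hM0 : 0 ≤ M := by
    unfold M
    unfold wgtCap
    rw [Finset.le_fold_max]
    exact Or.inl le_rfl
  have hMi : ∀ j ∈ pItems α', w j ≤ M := by
    intro j hj
    unfold M
    unfold wgtCap
    rw [Finset.le_fold_max]
    have := hitems hj
    rw [Finset.mem_union] at this
    rcases this with h' | h'
    · exact Or.inr ⟨j, Finset.mem_union_right _ h', le_rfl⟩
    · exact Or.inr ⟨j, Finset.mem_union_left _ h', le_rfl⟩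
  have hES : expSup DB α' ≤ expSupCap DB β i := by
    unfold expSupCap expSup
    rw [← List.sum_map_mul_left]
    apply List.sum_le_sum
    intro S hSmem
    have hS := hDB S hSmem
    calc maxPr S α' ≤ maxPr S (β ++ [{i}]) := maxPr_le_of_subpattern S hS hsub
      _ ≤ maxPr S β * maxPr S [({i} : Finset I)] := maxPr_append_singleton S hS β i
      _ ≤ maxPrDB DB β * maxPr S [({i} : Finset I)] := by
          apply mul_le_mul_of_nonneg_right _ (maxPr_nonneg S hS _)
          exact le_foldr_max (List.mem_map.mpr ⟨S, hSmem, rfl⟩)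
  have hSW : sWeight w α' ≤ M := sWeight_le w α' M hM0 hMi
  have hcap0 : 0 ≤ expSupCap DB β i := by
    unfold expSupCap
    apply mul_nonneg (foldr_max_nonneg _)
    apply List.sum_nonneg
    intro x hx
    simp only [List.mem_map] at hx
    obtain ⟨S, hSmem, rfl⟩ := hx
    exact maxPr_nonneg S (hDB S hSmem) _
  calc WES DB w α' = expSup DB α' * sWeight w α' := rfl
    _ ≤ expSupCap DB β i * M :=
        mul_le_mul hES hSW (sWeight_nonneg w hw α') hcap0
    _ < θ := h
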